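/- Let p ∈ (0,1), and define q_Lap(y) = (ln(1/p)/(2(1-p)²))·(p^{|y|} - p^{2-|y|}) for |y| ≤ 1 and 0 otherwise. Then q_Lap is a probability density, and if η is discrete Laplace with parameter p and Y is an independent random variable with density q_Lap, then η + Y has the continuous Laplace density f(z) = (ln(1/p)/2)·p^{|z|}. -/

import Mathlib

/-!
Write `C = ln(1/p) / (2(1-p)²)`. For `t ∈ [0, 1]`, `q_Lap(t) = C (p^t - p^(2-t))` and
`q_Lap(t - 1) = C (p^(1-t) - p^(1+t))`, while `q_Lap` vanishes off `(-1, 1)`. So for `z = n + t`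
with `n ∈ ℕ`, `t ∈ [0, 1)`, only `k = n, n + 1` contribute to the convolution, and with `Q = p^t`
the two terms telescope: `p^n (Q - p²/Q) + p^(n+1) (p/Q - p Q) = (1 - p²) p^z`; finally
`(1-p)/(1+p) · C · (1 - p²) = ln(1/p)/2`. Both sides are even in `z`, which covers `z < 0`.
The normalisation reduces to `∫₀¹ (p^u - p^(2-u)) du = (1 - p)² / ln(1/p)`.
-/

open MeasureTheory

/-- The post-processing density turning discrete Laplace into continuous
Laplace noise. -/
noncomputable def qLap (p : ℝ) (y : ℝ) : ℝ :=
  if |y| ≤ 1 then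
    Real.log (1 / p) / (2 * (1 - p) ^ 2) * (p ^ |y| - p ^ (2 - |y|))
  else 0

open Set

theorem qLap_nonneg {p : ℝ} (hp0 : 0 ≤ p) (hp1 : p ≤ 1) (y : ℝ) : 0 ≤ qLap p y := by
  unfold qLap
  split_ifs with hy
  · have hlog : 0 ≤ Real.log (1 / p) := by
      rw [one_div, Real.log_inv, neg_nonneg]
      exact Real.log_nonpos hp0 hp1
    have hpow : p ^ (2 - |y|) ≤ p ^ |y| :=
      Real.rpow_le_rpow_of_exponent_ge' hp0 hp1 (abs_nonneg y) (by linarith)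
    exact mul_nonneg (by positivity) (sub_nonneg.2 hpow)
  · exact le_rfl

theorem qLap_neg (p y : ℝ) : qLap p (-y) = qLap p y := by
  simp only [qLap, abs_neg]

theorem qLap_eq_zero_of_one_le_abs (p : ℝ) {y : ℝ} (hy : 1 ≤ |y|) : qLap p y = 0 := by
  rcases hy.eq_or_lt with h | h
  · simp [qLap, ← h, show (2 : ℝ) - 1 = 1 by norm_num]
  · simp [qLap, h]

theorem qLap_of_mem_Icc (p : ℝ) {t : ℝ} (ht0 : 0 ≤ t) (ht1 : t ≤ 1) :
    qLap p t = Real.log (1 / p) / (2 * (1 - p) ^ 2) * (p ^ t - p ^ (2 - t)) := by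
  simp [qLap, abs_of_nonneg ht0, ht1]

theorem qLap_sub_one_of_mem_Icc (p : ℝ) {t : ℝ} (ht0 : 0 ≤ t) (ht1 : t ≤ 1) :
    qLap p (t - 1) = Real.log (1 / p) / (2 * (1 - p) ^ 2) * (p ^ (1 - t) - p ^ (1 + t)) := by
  have habs : |t - 1| = 1 - t := by rw [abs_sub_comm, abs_of_nonneg (by linarith)]
  simp only [qLap, habs, if_pos (by linarith : 1 - t ≤ 1)]
  ring_nf

theorem integral_indicator_Iic_comp_abs (g : ℝ → ℝ) {a : ℝ} (ha : 0 ≤ a) :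
    ∫ y, (Iic a).indicator g |y| = 2 * ∫ u in (0 : ℝ)..a, g u := by
  rw [integral_comp_abs, integral_indicator measurableSet_Iic,
    Measure.restrict_restrict measurableSet_Iic, Iic_inter_Ioi,
    ← intervalIntegral.integral_of_le ha]

theorem hasDerivAt_rpow_add_rpow_two_sub_div_log {p : ℝ} (hp0 : 0 < p) (hp1 : p ≠ 1) (u : ℝ) :
    HasDerivAt (fun u => (p ^ u + p ^ (2 - u)) / Real.log p) (p ^ u - p ^ (2 - u)) u := by
  have hlog : Real.log p ≠ 0 := Real.log_ne_zero_of_pos_of_ne_one hp0 hp1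
  have hleft := (Real.hasStrictDerivAt_const_rpow hp0 u).hasDerivAt
  have hright := (Real.hasStrictDerivAt_const_rpow hp0 (2 - u)).hasDerivAt.comp u
    ((hasDerivAt_id u).const_sub 2)
  refine ((hleft.add hright).div_const (Real.log p)).congr_deriv ?_
  field_simp
  ring

theorem integral_rpow_sub_rpow_two_sub {p : ℝ} (hp0 : 0 < p) (hp1 : p ≠ 1) :
    ∫ u in (0 : ℝ)..1, (p ^ u - p ^ (2 - u)) = (1 - p) ^ 2 / Real.log (1 / p) := by
  have hcont : Continuous fun u : ℝ => p ^ u - p ^ (2 - u) := by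
    fun_prop (disch := exact hp0.ne')
  rw [intervalIntegral.integral_eq_sub_of_hasDerivAt
    (fun u _ => hasDerivAt_rpow_add_rpow_two_sub_div_log hp0 hp1 u) (hcont.intervalIntegrable 0 1)]
  have hp2 : p ^ (2 : ℝ) = p ^ 2 := Real.rpow_two p
  norm_num [hp2, one_div, Real.log_inv]
  field_simp
  ring

theorem integral_qLap {p : ℝ} (hp0 : 0 < p) (hp1 : p < 1) : ∫ y, qLap p y = 1 := by
  set C := Real.log (1 / p) / (2 * (1 - p) ^ 2)
  have hqLap : qLap p = fun y => (Iic 1).indicator (fun u => C * (p ^ u - p ^ (2 - u))) |y| := by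
    ext y
    simp only [qLap, indicator_apply, mem_Iic, C]
  have hlog : Real.log (1 / p) ≠ 0 := by
    rw [one_div, Real.log_inv, neg_ne_zero]
    exact (Real.log_neg hp0 hp1).ne
  have h1p : 1 - p ≠ 0 := by linarith
  rw [hqLap, integral_indicator_Iic_comp_abs _ zero_le_one, intervalIntegral.integral_const_mul,
    integral_rpow_sub_rpow_two_sub hp0 hp1.ne]
  simp only [C]
  field_simp

theorem tsum_mul_qLap_sub_intCast (p : ℝ) (f : ℤ → ℝ) {z : ℝ} {n : ℤ} (hn : n ≤ z)
    (hn1 : z < n + 1) :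
    ∑' k : ℤ, f k * qLap p (z - k) = f n * qLap p (z - n) + f (n + 1) * qLap p (z - (n + 1)) := by
  have hsupp : ∀ k ∉ ({n, n + 1} : Finset ℤ), f k * qLap p (z - k) = 0 := by
    intro k hk
    simp only [Finset.mem_insert, Finset.mem_singleton, not_or] at hk
    suffices 1 ≤ |z - k| by rw [qLap_eq_zero_of_one_le_abs p this, mul_zero]
    rcases lt_or_gt_of_ne hk.1 with hlt | hgt
    · have : (k : ℝ) ≤ n - 1 := by exact_mod_cast Int.le_sub_one_of_lt hlt
      exact le_abs.2 (Or.inl (by linarith))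
    · have : (n : ℝ) + 2 ≤ k := by exact_mod_cast (by omega : n + 2 ≤ k)
      exact le_abs.2 (Or.inr (by linarith))
  rw [tsum_eq_sum hsupp, Finset.sum_pair (by omega : n ≠ n + 1), Int.cast_add, Int.cast_one]

theorem tsum_discreteLaplace_mul_qLap_neg (p z : ℝ) :
    ∑' k : ℤ, (1 - p) / (1 + p) * p ^ |k| * qLap p (-z - k) =
      ∑' k : ℤ, (1 - p) / (1 + p) * p ^ |k| * qLap p (z - k) := by
  rw [← (Equiv.neg ℤ).tsum_eq]
  congr 1 with k
  rw [Equiv.neg_apply, abs_neg, Int.cast_neg, ← qLap_neg p, neg_sub_neg, neg_sub]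

theorem tsum_discreteLaplace_mul_qLap_of_nonneg {p : ℝ} (hp0 : 0 < p) (hp1 : p < 1) {z : ℝ}
    (hz : 0 ≤ z) :
    ∑' k : ℤ, (1 - p) / (1 + p) * p ^ |k| * qLap p (z - k) = Real.log (1 / p) / 2 * p ^ z := by
  set n := ⌊z⌋₊
  set t := z - n
  have ht0 : 0 ≤ t := sub_nonneg.2 (Nat.floor_le hz)
  have ht1 : t < 1 := by simp only [t]; linarith [Nat.lt_floor_add_one z]
  have hzt : z = n + t := by ring
  rw [tsum_mul_qLap_sub_intCast p _ (n := n) (by simpa using Nat.floor_le hz) (by simpa using Nat.lt_floor_add_one z)]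
  have hnext : z - ((n : ℝ) + 1) = t - 1 := by ring
  rw [Int.cast_natCast, hnext, qLap_of_mem_Icc p ht0 ht1.le,
    qLap_sub_one_of_mem_Icc p ht0 ht1.le, ← Nat.cast_add_one, Nat.abs_cast, Nat.abs_cast,
    zpow_natCast, zpow_natCast, hzt, Real.rpow_add hp0 n t, Real.rpow_natCast,
    Real.rpow_sub hp0 2 t, Real.rpow_sub hp0 1 t, Real.rpow_add hp0 1 t, Real.rpow_one,
    Real.rpow_two, pow_succ]
  have hQ : 0 < p ^ t := Real.rpow_pos_of_pos hp0 t
  have h1p : 1 - p ≠ 0 := by linarith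
  field_simp
  ring

theorem discrete_laplace_to_laplace
    (p : ℝ) (hp0 : 0 < p) (hp1 : p < 1) :
    (∀ y : ℝ, 0 ≤ qLap p y) ∧
      (∫ y : ℝ, qLap p y) = 1 ∧
      ∀ z : ℝ, (∑' k : ℤ, (1 - p) / (1 + p) * p ^ |k| * qLap p (z - k)) =
        Real.log (1 / p) / 2 * p ^ |z| := by
  refine ⟨qLap_nonneg hp0.le hp1.le, integral_qLap hp0 hp1, fun z => ?_⟩
  rcases le_total 0 z with hz | hz
  · rw [abs_of_nonneg hz]
    exact tsum_discreteLaplace_mul_qLap_of_nonneg hp0 hp1 hz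
  · rw [abs_of_nonpos hz, ← neg_neg z, tsum_discreteLaplace_mul_qLap_neg, neg_neg]
    exact tsum_discreteLaplace_mul_qLap_of_nonneg hp0 hp1 (neg_nonneg.2 hz)
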